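/- arXiv:1603.03671 — 3 statements merged into one kernel-verified Lean document; each statement's English description precedes it below -/
import Mathlib

section
/- Any two countable simple graphs having property (R) are isomorphic. -/
/-!
Back and forth: a finite partial isomorphism `f` can be extended to any new vertex `a`, because
property (R) of the target provides a fresh vertex adjacent exactly to the images of the
neighbours of `a` in the domain of `f`; by symmetry it can also be extended to any new target
vertex. For countable vertex sets, the Rasiowa–Sikorski lemma then yields a directed family of
finite partial isomorphisms defined everywhere on both sides, whose union is an isomorphism.
-/

/-- A simple graph has property (R) if for all disjoint finite subsets `U`, `W` of its
vertex set there exists a vertex outside `U ∪ W` adjacent to every vertex of `U` and to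
no vertex of `W`. -/
def SimpleGraph.HasPropR {V : Type*} (G : SimpleGraph V) : Prop :=
  ∀ U W : Finset V, Disjoint U W →
    ∃ z, z ∉ U ∧ z ∉ W ∧ (∀ u ∈ U, G.Adj z u) ∧ (∀ w ∈ W, ¬ G.Adj z w)

namespace SimpleGraph

variable {V W : Type*} (G : SimpleGraph V) (H : SimpleGraph W)

/-- Finite partial isomorphisms from `G` to `H`, encoded by their graphs, ordered by inclusion. -/
def FinPartialIso : Type _ :=
  { f : Finset (V × W) //
    ∀ p ∈ f, ∀ q ∈ f, (p.1 = q.1 ↔ p.2 = q.2) ∧ (G.Adj p.1 q.1 ↔ H.Adj p.2 q.2) }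

namespace FinPartialIso

instance : Preorder (G.FinPartialIso H) := inferInstanceAs (Preorder (Subtype _))

instance : Inhabited (G.FinPartialIso H) :=
  ⟨⟨∅, fun _ h => (Finset.notMem_empty _ h).elim⟩⟩

variable {G H}

def Compatible (f : G.FinPartialIso H) (a : V) (b : W) : Prop :=
  ∀ p ∈ f.1, (p.1 = a ↔ p.2 = b) ∧ (G.Adj p.1 a ↔ H.Adj p.2 b)

def swap (f : G.FinPartialIso H) : H.FinPartialIso G :=
  ⟨f.1.map (Equiv.prodComm V W).toEmbedding, by
    simp only [Finset.forall_mem_map]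
    exact fun p hp q hq => ⟨(f.2 p hp q hq).1.symm, (f.2 p hp q hq).2.symm⟩⟩

theorem mem_swap {f : G.FinPartialIso H} {p : V × W} : p.swap ∈ f.swap.1 ↔ p ∈ f.1 :=
  Finset.mem_map_equiv.trans (by simp)

def insert [DecidableEq V] [DecidableEq W] (f : G.FinPartialIso H) (a : V) (b : W)
    (h : f.Compatible a b) : G.FinPartialIso H :=
  ⟨Insert.insert (a, b) f.1, by
    simp only [Finset.forall_mem_insert]
    refine ⟨⟨by simp, fun q hq => ?_⟩, fun p hp => ⟨h p hp, f.2 p hp⟩⟩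
    rw [eq_comm, @eq_comm _ b, G.adj_comm, H.adj_comm]
    exact h q hq⟩

theorem le_insert [DecidableEq V] [DecidableEq W] (f : G.FinPartialIso H) (a : V) (b : W)
    (h : f.Compatible a b) : f ≤ f.insert a b h :=
  Finset.subset_insert _ _

theorem mem_insert [DecidableEq V] [DecidableEq W] (f : G.FinPartialIso H) (a : V) (b : W)
    (h : f.Compatible a b) : (a, b) ∈ (f.insert a b h).1 :=
  Finset.mem_insert_self _ _

theorem exists_across (hH : H.HasPropR) (f : G.FinPartialIso H) (a : V) :
    ∃ b, f.Compatible a b := by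
  classical
  by_cases hdom : ∃ b, (a, b) ∈ f.1
  · obtain ⟨b, hb⟩ := hdom
    exact ⟨b, fun p hp => f.2 p hp _ hb⟩
  push Not at hdom
  set U := (f.1.filter fun p => G.Adj p.1 a).image Prod.snd
  set U' := (f.1.filter fun p => ¬G.Adj p.1 a).image Prod.snd
  have hUU' : Disjoint U U' := by
    simp only [U, U', Finset.disjoint_left, Finset.mem_image, Finset.mem_filter]
    rintro _ ⟨p, ⟨hp, hpa⟩, rfl⟩ ⟨q, ⟨hq, hqa⟩, hqp⟩
    exact hqa ((f.2 q hq p hp).1.2 hqp ▸ hpa)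
  obtain ⟨b, hbU, hbU', hadj, hnadj⟩ := hH U U' hUU'
  refine ⟨b, fun p hp => ?_⟩
  have hpa : p.1 ≠ a := fun h => hdom p.2 (h ▸ hp)
  by_cases hpa' : G.Adj p.1 a
  · have hpU : p.2 ∈ U := Finset.mem_image_of_mem _ (Finset.mem_filter.2 ⟨hp, hpa'⟩)
    exact ⟨iff_of_false hpa (fun h => hbU (h ▸ hpU)), iff_of_true hpa' (hadj _ hpU).symm⟩
  · have hpU' : p.2 ∈ U' := Finset.mem_image_of_mem _ (Finset.mem_filter.2 ⟨hp, hpa'⟩)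
    exact ⟨iff_of_false hpa (fun h => hbU' (h ▸ hpU')),
      iff_of_false hpa' fun h => hnadj _ hpU' h.symm⟩

theorem exists_across_left (hG : G.HasPropR) (f : G.FinPartialIso H) (b : W) :
    ∃ a, f.Compatible a b := by
  obtain ⟨a, ha⟩ := f.swap.exists_across hG b
  exact ⟨a, fun p hp => (ha p.swap (mem_swap.2 hp)).imp Iff.symm Iff.symm⟩

variable (G) in
def definedAtLeft (hH : H.HasPropR) (a : V) : Order.Cofinal (G.FinPartialIso H) where
  carrier := {f | ∃ b, (a, b) ∈ f.1}
  isCofinal f := by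
    classical
    obtain ⟨b, hb⟩ := f.exists_across hH a
    exact ⟨f.insert a b hb, ⟨b, f.mem_insert a b hb⟩, f.le_insert a b hb⟩

variable (H) in
def definedAtRight (hG : G.HasPropR) (b : W) : Order.Cofinal (G.FinPartialIso H) where
  carrier := {f | ∃ a, (a, b) ∈ f.1}
  isCofinal f := by
    classical
    obtain ⟨a, ha⟩ := f.exists_across_left hG b
    exact ⟨f.insert a b ha, ⟨a, f.mem_insert a b ha⟩, f.le_insert a b ha⟩

theorem nonempty_iso_of_ideal (I : Order.Ideal (G.FinPartialIso H))
    (hleft : ∀ a, ∃ f ∈ I, ∃ b, (a, b) ∈ f.1) (hright : ∀ b, ∃ f ∈ I, ∃ a, (a, b) ∈ f.1) :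
    Nonempty (G ≃g H) := by
  have compat : ∀ {a b a' b'}, (∃ f ∈ I, (a, b) ∈ f.1) → (∃ f ∈ I, (a', b') ∈ f.1) →
      (a = a' ↔ b = b') ∧ (G.Adj a a' ↔ H.Adj b b') := by
    rintro a b a' b' ⟨f, hf, hab⟩ ⟨g, hg, hab'⟩
    obtain ⟨m, -, hfm, hgm⟩ := I.directed f hf g hg
    exact m.2 _ (hfm hab) _ (hgm hab')
  choose f hf φ hφ using hleft
  choose g hg ψ hψ using hright
  have hφ' a : ∃ f ∈ I, (a, φ a) ∈ f.1 := ⟨f a, hf a, hφ a⟩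
  have hψ' b : ∃ f ∈ I, (ψ b, b) ∈ f.1 := ⟨g b, hg b, hψ b⟩
  exact ⟨{ toFun := φ
           invFun := ψ
           left_inv := fun a => (compat (hψ' (φ a)) (hφ' a)).1.2 rfl
           right_inv := fun b => (compat (hφ' (ψ b)) (hψ' b)).1.1 rfl
           map_rel_iff' := fun {a a'} => (compat (hφ' a) (hφ' a')).2.symm }⟩

end FinPartialIso

end SimpleGraph

/-- Any two countable simple graphs with property (R) are isomorphic. -/
theorem iso_of_hasPropR {V₁ V₂ : Type*} [Countable V₁] [Countable V₂]
    (R₁ : SimpleGraph V₁) (R₂ : SimpleGraph V₂)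
    (h₁ : R₁.HasPropR) (h₂ : R₂.HasPropR) :
    Nonempty (R₁ ≃g R₂) := by
  cases nonempty_encodable V₁
  cases nonempty_encodable V₂
  let D : V₁ ⊕ V₂ → Order.Cofinal (R₁.FinPartialIso R₂) :=
    Sum.elim (SimpleGraph.FinPartialIso.definedAtLeft R₁ h₂)
      (SimpleGraph.FinPartialIso.definedAtRight R₂ h₁)
  let I := Order.idealOfCofinals default D
  refine SimpleGraph.FinPartialIso.nonempty_iso_of_ideal I (fun a => ?_) (fun b => ?_)
  · obtain ⟨f, hfD, hfI⟩ := Order.cofinal_meets_idealOfCofinals default D (.inl a)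
    exact ⟨f, hfI, hfD⟩
  · obtain ⟨f, hfD, hfI⟩ := Order.cofinal_meets_idealOfCofinals default D (.inr b)
    exact ⟨f, hfI, hfD⟩
end

section
/- Let Γ act homogeneously by automorphisms on a countable simple graph R with property (R) and let N be a normal subgroup of Γ. Then either N acts trivially on R (every element of N fixes every vertex) or the restricted action of N on R is homogeneous. -/
/-- An action of `Γ` on a graph `G` is homogeneous if every isomorphism between finite
induced subgraphs is realised by a group element. -/
def IsHomogeneousAction {Γ : Type*} [Group Γ] {V : Type*} (G : SimpleGraph V)
    (ρ : Γ →* (G ≃g G)) : Prop :=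
  ∀ (A : Finset V) (φ : V → V), Set.InjOn φ (↑A : Set V) →
    (∀ u ∈ A, ∀ v ∈ A, G.Adj u v ↔ G.Adj (φ u) (φ v)) →
    ∃ g : Γ, ∀ u ∈ A, ρ g u = φ u

/-!
Fix `n₀ ∈ N` moving some vertex. By induction on the domain of a partial isomorphism,
homogeneity of `N` reduces to one-point extensions: for finite `S` and vertices `c ≠ b` outside
`S` with the same neighbours in `S`, some element of `N` fixes `S` pointwise and sends `c` to `b`.
Property (R) and the homogeneity of `Γ` conjugate `n₀` inside `N` to some `n` with `n p = q` and
`n q ∉ S`, where `q` has the neighbourhood type of `c` over `S`. If `k ∈ Γ` fixes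
`S ∪ n⁻¹ S ∪ {p}` and sends `q` to a fresh vertex `v` of the same type, with `v ~ q` iff `c ~ b`,
the commutator `n k n⁻¹ k⁻¹ ∈ N` fixes `S` and sends `v` to `q`. Conjugating it by an element of
`Γ` fixing `S` and mapping `v, q` to `c, b` gives the extension.
-/

namespace SimpleGraph

variable {V : Type*} {G : SimpleGraph V}

theorem HasPropR.exists_adj_iff (hG : G.HasPropR) (D : Finset V) (P : V → Prop) :
    ∃ z ∉ D, ∀ d ∈ D, G.Adj z d ↔ P d := by
  classical
  obtain ⟨z, hzP, hzQ, hP, hQ⟩ :=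
    hG (D.filter P) (D.filter (¬ P ·)) (Finset.disjoint_filter_filter_not D D P)
  refine ⟨z, fun hz => ?_, fun d hd => ?_⟩
  · by_cases h : P z
    exacts [hzP (Finset.mem_filter.2 ⟨hz, h⟩), hzQ (Finset.mem_filter.2 ⟨hz, h⟩)]
  · by_cases h : P d
    exacts [iff_of_true (hP d (Finset.mem_filter.2 ⟨hd, h⟩)) h,
      iff_of_false (hQ d (Finset.mem_filter.2 ⟨hd, h⟩)) h]

variable (G) in
structure IsPartialIso (A : Finset V) (φ : V → V) : Prop where
  injOn : Set.InjOn φ A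
  adj_iff : ∀ u ∈ A, ∀ v ∈ A, G.Adj u v ↔ G.Adj (φ u) (φ v)

theorem isPartialIso_id (A : Finset V) : G.IsPartialIso A id :=
  ⟨Set.injOn_id _, fun _ _ _ _ => Iff.rfl⟩

theorem IsPartialIso.mono {A B : Finset V} {φ : V → V} (h : G.IsPartialIso B φ)
    (hAB : A ⊆ B) : G.IsPartialIso A φ :=
  ⟨h.injOn.mono (Finset.coe_subset.2 hAB), fun u hu v hv => h.adj_iff u (hAB hu) v (hAB hv)⟩

theorem IsPartialIso.update [DecidableEq V] {A : Finset V} {φ : V → V}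
    (h : G.IsPartialIso A φ) {a a' : V} (ha : a ∉ A) (ha' : ∀ u ∈ A, φ u ≠ a')
    (hadj : ∀ u ∈ A, G.Adj a u ↔ G.Adj a' (φ u)) :
    G.IsPartialIso (insert a A) (Function.update φ a a') := by
  have hupd : ∀ u ∈ A, Function.update φ a a' u = φ u := fun u hu =>
    Function.update_of_ne (ne_of_mem_of_not_mem hu ha) _ _
  constructor
  · rw [Finset.coe_insert, Set.injOn_insert (Finset.mem_coe.not.2 ha)]
    refine ⟨h.injOn.congr fun u hu => (hupd u hu).symm, ?_⟩
    rintro ⟨u, hu, hua⟩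
    rw [hupd u hu, Function.update_self] at hua
    exact ha' u hu hua
  · intro u hu v hv
    rcases Finset.mem_insert.1 hu with rfl | hu' <;> rcases Finset.mem_insert.1 hv with rfl | hv'
    · simp
    · rw [Function.update_self, hupd v hv']
      exact hadj v hv'
    · rw [Function.update_self, hupd u hu', G.adj_comm u, G.adj_comm (φ u)]
      exact hadj u hu'
    · rw [hupd u hu', hupd v hv']
      exact h.adj_iff u hu' v hv'

end SimpleGraph

open SimpleGraph

section Action

variable {Γ : Type*} [Group Γ] {V : Type*} {R : SimpleGraph V} {ρ : Γ →* (R ≃g R)}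

theorem inv_apply_of_apply_eq {g : Γ} {x y : V} (h : ρ g x = y) : ρ g⁻¹ y = x := by
  subst h; simp

theorem conj_apply_of_apply_eq {g : Γ} (m : Γ) {x y : V} (h : ρ g x = y) :
    ρ (g * m * g⁻¹) y = ρ g (ρ m x) := by
  subst h; simp [RelIso.mul_apply]

theorem exists_mem_eqOn_of_forall_exists_fix {N : Subgroup Γ}
    (hext : ∀ (S : Finset V) (c b : V), c ∉ S → b ∉ S → c ≠ b →
      (∀ s ∈ S, R.Adj c s ↔ R.Adj b s) → ∃ m ∈ N, (∀ s ∈ S, ρ m s = s) ∧ ρ m c = b)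
    {A : Finset V} {φ : V → V} (hφ : R.IsPartialIso A φ) :
    ∃ n ∈ N, ∀ u ∈ A, ρ n u = φ u := by
  classical
  induction A using Finset.induction_on with
  | empty => exact ⟨1, N.one_mem, by simp⟩
  | @insert a A haA ih =>
    obtain ⟨n, hnN, hn⟩ := ih (hφ.mono (Finset.subset_insert a A))
    by_cases hna : ρ n a = φ a
    · exact ⟨n, hnN, Finset.forall_mem_insert _ _ _ |>.2 ⟨hna, hn⟩⟩
    have hc : ρ n a ∉ A.image φ := by
      simp only [Finset.mem_image, not_exists, not_and]
      intro u hu hua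
      rw [← hn u hu] at hua
      exact haA ((ρ n).injective hua ▸ hu)
    have hb : φ a ∉ A.image φ := by
      simp only [Finset.mem_image, not_exists, not_and]
      intro u hu hua
      exact haA (hφ.injOn (Finset.mem_insert_of_mem hu) (Finset.mem_insert_self a A) hua ▸ hu)
    have htype : ∀ s ∈ A.image φ, R.Adj (ρ n a) s ↔ R.Adj (φ a) s := by
      simp only [Finset.forall_mem_image]
      intro u hu
      calc R.Adj (ρ n a) (φ u) ↔ R.Adj (ρ n a) (ρ n u) := by rw [hn u hu]
        _ ↔ R.Adj (φ a) (φ u) :=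
          (ρ n).map_adj_iff.trans (hφ.adj_iff a (Finset.mem_insert_self a A) u
            (Finset.mem_insert_of_mem hu))
    obtain ⟨m, hmN, hmS, hma⟩ := hext (A.image φ) (ρ n a) (φ a) hc hb hna htype
    refine ⟨m * n, mul_mem hmN hnN, Finset.forall_mem_insert _ _ _ |>.2 ⟨?_, fun u hu => ?_⟩⟩
    · rw [map_mul, RelIso.mul_apply, hma]
    · rw [map_mul, RelIso.mul_apply, hn u hu]
      exact hmS (φ u) (Finset.mem_image_of_mem φ hu)

variable {N : Subgroup Γ}

theorem exists_mem_apply_eq_apply_notMem (hR : R.HasPropR) (hhom : IsHomogeneousAction R ρ)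
    (hN : N.Normal) {n₀ : Γ} (hn₀ : n₀ ∈ N) {x : V} (hx : ρ n₀ x ≠ x) {S : Finset V}
    {p q : V} (hp : p ∉ S) (hpq : p ≠ q) (hadj : R.Adj p q ↔ R.Adj x (ρ n₀ x)) :
    ∃ n ∈ N, ρ n p = q ∧ ρ n q ∉ S := by
  classical
  set y := ρ n₀ x
  set z := ρ n₀ y
  suffices ∃ g : Γ, ρ g x = p ∧ ρ g y = q ∧ ρ g z ∉ S by
    obtain ⟨g, hgx, hgy, hgz⟩ := this
    refine ⟨g * n₀ * g⁻¹, hN.conj_mem n₀ hn₀ g, ?_, ?_⟩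
    · rw [conj_apply_of_apply_eq n₀ hgx, hgy]
    · rwa [conj_apply_of_apply_eq n₀ hgy]
  have hpair : R.IsPartialIso {y, x} (Function.update (Function.update id x p) y q) :=
    ((isPartialIso_id ∅).update (Finset.notMem_empty x) (by simp) (by simp)).update
      (by simpa using hx) (by simp [hpq]) (by simpa [R.adj_comm] using hadj.symm)
  by_cases hzx : z = x
  · obtain ⟨g, hg⟩ := hhom _ _ hpair.injOn hpair.adj_iff
    have hgx : ρ g x = p := by simpa [hx.symm] using hg x
    exact ⟨g, hgx, by simpa using hg y, by rwa [hzx, hgx]⟩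
  · have hzy : z ≠ y := fun h => hx ((ρ n₀).injective h)
    obtain ⟨r, hr, hradj⟩ := hR.exists_adj_iff ({p, q} ∪ S)
      fun d => if d = p then R.Adj z x else R.Adj z y
    have hrp : r ≠ p := fun h => hr (by simp [h])
    have hrq : r ≠ q := fun h => hr (by simp [h])
    have hrp_adj : R.Adj r p ↔ R.Adj z x := by simpa using hradj p (by simp)
    have hrq_adj : R.Adj r q ↔ R.Adj z y := by simpa [hpq.symm] using hradj q (by simp)
    have htriple := hpair.update (a := z) (a' := r) (by simp [hzx, hzy])
      (by simp [hx.symm, hrp.symm, hrq.symm]) (by simp [hx.symm, hrp_adj, hrq_adj])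
    obtain ⟨g, hg⟩ := hhom _ _ htriple.injOn htriple.adj_iff
    refine ⟨g, by simpa [Ne.symm hzx, hx.symm] using hg x, by simpa [Ne.symm hzy] using hg y, ?_⟩
    rw [show ρ g z = r by simpa using hg z]
    exact fun h => hr (Finset.mem_union_right _ h)

theorem exists_mem_fix_apply_eq_of_apply_eq (hR : R.HasPropR) (hhom : IsHomogeneousAction R ρ)
    (hN : N.Normal) {n : Γ} (hn : n ∈ N) {S : Finset V} {p q : V} (hq : q ∉ S) (hpq : p ≠ q)
    (hnp : ρ n p = q) (hnq : ρ n q ∉ S) (P : Prop) :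
    ∃ m ∈ N, (∀ s ∈ S, ρ m s = s) ∧ ∃ v ∉ S, v ≠ q ∧ (∀ s ∈ S, R.Adj v s ↔ R.Adj q s) ∧
      (R.Adj v q ↔ P) ∧ ρ m v = q := by
  classical
  set D := insert p (S ∪ S.image (ρ n⁻¹))
  have hqD : q ∉ D := by
    simp only [D, Finset.mem_insert, Finset.mem_union, Finset.mem_image, not_or, not_exists,
      not_and]
    exact ⟨hpq.symm, hq, fun s hs hsq => hnq (by simpa [← hsq] using hs)⟩
  obtain ⟨v, hv, hvadj⟩ := hR.exists_adj_iff (insert q D) fun d => if d = q then P else R.Adj q d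
  have hvq : v ≠ q := fun h => hv (h ▸ Finset.mem_insert_self q D)
  have hvD : v ∉ D := fun h => hv (Finset.mem_insert_of_mem h)
  have hDq : ∀ d ∈ D, d ≠ q := fun d hd h => hqD (h ▸ hd)
  have hvD_adj : ∀ d ∈ D, R.Adj q d ↔ R.Adj v d := fun d hd => by
    simpa [hDq d hd] using (hvadj d (Finset.mem_insert_of_mem hd)).symm
  have hφ := (isPartialIso_id D).update hqD (fun u hu (h : u = v) => hvD (h ▸ hu)) hvD_adj
  obtain ⟨k, hk⟩ := hhom _ _ hφ.injOn hφ.adj_iff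
  have hfix : ∀ d ∈ D, ρ k d = d := fun d hd => by
    simpa [hDq d hd] using hk d (Finset.mem_insert_of_mem hd)
  have hkq : ρ k q = v := by simpa using hk q (Finset.mem_insert_self q D)
  have hSD : ∀ s ∈ S, s ∈ D := fun s hs => by simp [D, hs]
  refine ⟨n * (k * n⁻¹ * k⁻¹), mul_mem hn (hN.conj_mem _ (inv_mem hn) k), fun s hs => ?_,
    v, fun hvS => hvD (hSD v hvS), hvq, fun s hs => (hvD_adj s (hSD s hs)).symm,
    by simpa using hvadj q (Finset.mem_insert_self q D), ?_⟩
  · have hns : ρ n⁻¹ s ∈ D := by simp [D, hs]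
    simp only [map_mul, RelIso.mul_apply]
    rw [inv_apply_of_apply_eq (hfix s (hSD s hs)), hfix _ hns]
    simp
  · simp only [map_mul, RelIso.mul_apply]
    rw [inv_apply_of_apply_eq hkq, inv_apply_of_apply_eq hnp, hfix p (Finset.mem_insert_self _ _),
      hnp]

theorem exists_mem_fix_apply_eq (hR : R.HasPropR) (hhom : IsHomogeneousAction R ρ)
    (hN : N.Normal) {n₀ : Γ} (hn₀ : n₀ ∈ N) {x : V} (hx : ρ n₀ x ≠ x) {S : Finset V} {c b : V}
    (hc : c ∉ S) (hb : b ∉ S) (hcb : c ≠ b) (htype : ∀ s ∈ S, R.Adj c s ↔ R.Adj b s) :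
    ∃ m ∈ N, (∀ s ∈ S, ρ m s = s) ∧ ρ m c = b := by
  classical
  obtain ⟨q, hqS, hq⟩ := hR.exists_adj_iff S (R.Adj c)
  obtain ⟨p, hp, hpq⟩ := hR.exists_adj_iff (insert q S) fun _ => R.Adj x (ρ n₀ x)
  have hpq' : p ≠ q := fun h => hp (h ▸ Finset.mem_insert_self q S)
  obtain ⟨n, hnN, hnp, hnq⟩ := exists_mem_apply_eq_apply_notMem hR hhom hN hn₀ hx
    (fun h => hp (Finset.mem_insert_of_mem h)) hpq' (hpq q (Finset.mem_insert_self q S))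
  obtain ⟨m, hmN, hmS, v, hvS, hvq, hv, hvadj, hmv⟩ :=
    exists_mem_fix_apply_eq_of_apply_eq hR hhom hN hnN hqS hpq' hnp hnq (R.Adj c b)
  have hSq : ∀ s ∈ S, s ≠ q := fun s hs h => hqS (h ▸ hs)
  have hφ := ((isPartialIso_id S).update hqS (fun u hu (h : u = b) => hb (h ▸ hu))
    fun s hs => (hq s hs).trans (htype s hs)).update (a := v) (a' := c) (by simp [hvq, hvS])
    (by simp +contextual [hcb.symm, hSq, hc]) (by simp +contextual [hvadj, hv, hq, hSq])
  obtain ⟨g, hg⟩ := hhom _ _ hφ.injOn hφ.adj_iff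
  have hgS : ∀ s ∈ S, ρ g s = s := fun s hs => by
    simpa [show s ≠ v from fun h => hvS (h ▸ hs), hSq s hs] using hg s (by simp [hs])
  refine ⟨g * m * g⁻¹, hN.conj_mem m hmN g, fun s hs => ?_, ?_⟩
  · rw [conj_apply_of_apply_eq m (hgS s hs), hmS s hs, hgS s hs]
  · rw [conj_apply_of_apply_eq m (by simpa using hg v (by simp) : ρ g v = c), hmv]
    simpa [hvq.symm] using hg q (by simp)

end Action

theorem normal_subgroup_homogeneous_general {Γ : Type*} [Group Γ] {V : Type*}
    (R : SimpleGraph V) (hR : R.HasPropR) (ρ : Γ →* (R ≃g R))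
    (hhom : IsHomogeneousAction R ρ) (N : Subgroup Γ) (hN : N.Normal) :
    (∀ n ∈ N, ∀ x : V, ρ n x = x) ∨
      (∀ (A : Finset V) (φ : V → V), Set.InjOn φ (↑A : Set V) →
        (∀ u ∈ A, ∀ v ∈ A, R.Adj u v ↔ R.Adj (φ u) (φ v)) →
        ∃ n ∈ N, ∀ u ∈ A, ρ n u = φ u) := by
  refine or_iff_not_imp_left.2 fun htriv A φ hinj hadj => ?_
  push Not at htriv
  obtain ⟨n₀, hn₀, x, hx⟩ := htriv
  exact exists_mem_eqOn_of_forall_exists_fix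
    (fun _ _ _ hc hb hcb htype => exists_mem_fix_apply_eq hR hhom hN hn₀ hx hc hb hcb htype)
    ⟨hinj, hadj⟩

/-- If `Γ` acts homogeneously on a countable graph with property (R) and `N ⊴ Γ`, then
either `N` acts trivially, or the restricted action of `N` is homogeneous. -/
theorem normal_subgroup_homogeneous {Γ : Type*} [Group Γ] {V : Type*} [Countable V]
    (R : SimpleGraph V) (hR : R.HasPropR) (ρ : Γ →* (R ≃g R))
    (hhom : IsHomogeneousAction R ρ) (N : Subgroup Γ) (hN : N.Normal) :
    (∀ n ∈ N, ∀ x : V, ρ n x = x) ∨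
      (∀ (A : Finset V) (φ : V → V), Set.InjOn φ (↑A : Set V) →
        (∀ u ∈ A, ∀ v ∈ A, R.Adj u v ↔ R.Adj (φ u) (φ v)) →
        ∃ n ∈ N, ∀ u ∈ A, ρ n u = φ u) :=
  normal_subgroup_homogeneous_general R hR ρ hhom N hN
end

section
/- Let Γ be an infinite countable group and let R be a countable simple graph with property (R). There exists an action of Γ by automorphisms on R that is non-singular, has property (F), and disconnects the finite sets. If moreover Γ is torsion-free, the action can be chosen to be in addition free. -/
/-- The action is non-singular: no vertex is adjacent to one of its translates. -/
def NonSingularAction {Γ : Type*} [Group Γ] {V : Type*} (G : SimpleGraph V)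
    (ρ : Γ →* (G ≃g G)) : Prop :=
  ∀ (g : Γ) (u : V), ¬ G.Adj (ρ g u) u

/-- Property (F): for all finite `S ⊆ Γ \ {1}` and finite `F ⊆ V` there is a vertex
outside `F`, not adjacent to any vertex of `F`, moved by every element of `S`. -/
def PropertyF {Γ : Type*} [Group Γ] {V : Type*} (G : SimpleGraph V)
    (ρ : Γ →* (G ≃g G)) : Prop :=
  ∀ (S : Finset Γ) (F : Finset V), (1 : Γ) ∉ S →
    ∃ x : V, x ∉ F ∧ (∀ u ∈ F, ¬ G.Adj x u) ∧ ∀ g ∈ S, ρ g x ≠ x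

/-- The action disconnects the finite sets. -/
def DisconnectsFinsets {Γ : Type*} [Group Γ] {V : Type*} (G : SimpleGraph V)
    (ρ : Γ →* (G ≃g G)) : Prop :=
  ∀ F : Finset V, ∃ g : Γ, (∀ u ∈ F, ρ g u ∉ F) ∧
    ∀ u ∈ F, ∀ v ∈ F, ¬ G.Adj (ρ g u) v

/-- The action is free. -/
def FreeAction {Γ : Type*} [Group Γ] {V : Type*} (G : SimpleGraph V)
    (ρ : Γ →* (G ≃g G)) : Prop :=
  ∀ (g : Γ) (x : V), ρ g x = x → g = 1

/-!
Let `Γ` act by left translation on a graph with vertex set `Γ × ℕ` in which the neighbours of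
`(1, n)` on lower levels form a prescribed finite set `e n`. If `e` lists every finite set at
arbitrarily high levels, the graph has property (R): a vertex `(1, n)` above `U ∪ W` with
`e n = U` witnesses it, and a vertex with `e n = ∅` witnesses property (F). The action is free,
and only finitely many translates of a finite set meet it or touch it, so an infinite `Γ`
disconnects finite sets. By the back-and-forth argument, countable graphs with property (R) are
isomorphic, so conjugating by an isomorphism moves the action onto `R`.
-/

namespace SimpleGraph

variable {A B : Type*} {G : SimpleGraph A} {H : SimpleGraph B}

variable (G H) in
def IsPartialIso_s10 (s : Set (A × B)) : Prop :=
  ∀ p ∈ s, ∀ q ∈ s, (p.1 = q.1 ↔ p.2 = q.2) ∧ (G.Adj p.1 q.1 ↔ H.Adj p.2 q.2)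

namespace IsPartialIso_s10

variable {s : Set (A × B)}

lemma preimage_swap (hs : G.IsPartialIso_s10 H s) : H.IsPartialIso_s10 G (Prod.swap ⁻¹' s) :=
  fun _ hp _ hq => ⟨(hs _ hp _ hq).1.symm, (hs _ hp _ hq).2.symm⟩

lemma insert_of_forall {a : A} {b : B} (hs : G.IsPartialIso_s10 H s)
    (hab : ∀ q ∈ s, (a = q.1 ↔ b = q.2) ∧ (G.Adj a q.1 ↔ H.Adj b q.2)) :
    G.IsPartialIso_s10 H (insert (a, b) s) := by
  rintro _ (rfl | hp) _ (rfl | hq)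
  · exact ⟨iff_of_true rfl rfl, iff_of_false (G.irrefl) (H.irrefl)⟩
  · exact hab _ hq
  · exact ⟨eq_comm.trans ((hab _ hp).1.trans eq_comm),
      (G.adj_comm _ _).trans ((hab _ hp).2.trans (H.adj_comm _ _))⟩
  · exact hs _ hp _ hq

lemma exists_insert_fst (hH : H.HasPropR) (hs : G.IsPartialIso_s10 H s) (hfin : s.Finite) (a : A) :
    ∃ b, G.IsPartialIso_s10 H (insert (a, b) s) := by
  classical
  by_cases ha : ∃ b, (a, b) ∈ s
  · obtain ⟨b, hb⟩ := ha
    exact ⟨b, by rwa [Set.insert_eq_of_mem hb]⟩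
  push Not at ha
  set U := (hfin.toFinset.filter fun p => G.Adj a p.1).image Prod.snd
  set W := (hfin.toFinset.filter fun p => ¬G.Adj a p.1).image Prod.snd
  have hUW : Disjoint U W := by
    simp only [U, W, Finset.disjoint_left, Finset.mem_image, Finset.mem_filter,
      Set.Finite.mem_toFinset]
    rintro _ ⟨p, ⟨hp, hpa⟩, rfl⟩ ⟨q, ⟨hq, hqa⟩, hpq⟩
    exact hqa ((hs q hq p hp).1.2 hpq ▸ hpa)
  have hU : ∀ q ∈ s, G.Adj a q.1 → q.2 ∈ U := fun q hq hadj =>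
    Finset.mem_image_of_mem _ (by simpa using ⟨hq, hadj⟩)
  have hW : ∀ q ∈ s, ¬G.Adj a q.1 → q.2 ∈ W := fun q hq hadj =>
    Finset.mem_image_of_mem _ (by simpa using ⟨hq, hadj⟩)
  obtain ⟨z, hzU, hzW, hzadj, hznadj⟩ := hH U W hUW
  refine ⟨z, hs.insert_of_forall fun q hq => ⟨iff_of_false ?_ ?_, ?_⟩⟩
  · rintro rfl
    exact ha q.2 hq
  · rintro rfl
    by_cases hadj : G.Adj a q.1
    exacts [hzU (hU q hq hadj), hzW (hW q hq hadj)]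
  · by_cases hadj : G.Adj a q.1
    exacts [iff_of_true hadj (hzadj _ (hU q hq hadj)), iff_of_false hadj (hznadj _ (hW q hq hadj))]

lemma exists_insert_snd (hG : G.HasPropR) (hs : G.IsPartialIso_s10 H s) (hfin : s.Finite) (b : B) :
    ∃ a, G.IsPartialIso_s10 H (insert (a, b) s) := by
  obtain ⟨a, ha⟩ := hs.preimage_swap.exists_insert_fst hG
    (hfin.preimage Prod.swap_injective.injOn) b
  refine ⟨a, ?_⟩
  convert ha.preimage_swap using 1
  ext ⟨x, y⟩
  simp [and_comm]

lemma iUnion {ι : Type*} {c : ι → Set (A × B)} (hdir : Directed (· ⊆ ·) c)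
    (hc : ∀ i, G.IsPartialIso_s10 H (c i)) : G.IsPartialIso_s10 H (⋃ i, c i) := by
  intro p hp q hq
  obtain ⟨i, hpi⟩ := Set.mem_iUnion.1 hp
  obtain ⟨j, hqj⟩ := Set.mem_iUnion.1 hq
  obtain ⟨k, hik, hjk⟩ := hdir i j
  exact hc k p (hik hpi) q (hjk hqj)

lemma nonempty_iso (hs : G.IsPartialIso_s10 H s) (hfst : ∀ a, ∃ b, (a, b) ∈ s)
    (hsnd : ∀ b, ∃ a, (a, b) ∈ s) : Nonempty (G ≃g H) := by
  choose f hf using hfst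
  have hinj : Function.Injective f := fun a a' h => (hs _ (hf a) _ (hf a')).1.2 h
  have hsurj : Function.Surjective f := fun b =>
    let ⟨a, ha⟩ := hsnd b
    ⟨a, (hs _ (hf a) _ ha).1.1 rfl⟩
  exact ⟨⟨Equiv.ofBijective f ⟨hinj, hsurj⟩, (hs _ (hf _) _ (hf _)).2.symm⟩⟩

end IsPartialIso_s10

namespace HasPropR

lemma nonempty (hG : G.HasPropR) : Nonempty A :=
  let ⟨z, _⟩ := hG ∅ ∅ (Finset.disjoint_empty_left _)
  ⟨z⟩

lemma exists_isPartialIso_seq (hG : G.HasPropR) (hH : H.HasPropR) (fA : ℕ → A)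
    (fB : ℕ → B) :
    ∃ c : ℕ → Set (A × B), Monotone c ∧ (∀ n, G.IsPartialIso_s10 H (c n)) ∧
      ∀ n, (∃ b, (fA n, b) ∈ c (n + 1)) ∧ ∃ a, (a, fB n) ∈ c (n + 1) := by
  let P := {s : Set (A × B) // s.Finite ∧ G.IsPartialIso_s10 H s}
  have step : ∀ (s : P) (n : ℕ), ∃ t : P, s.1 ⊆ t.1 ∧
      (∃ b, (fA n, b) ∈ t.1) ∧ ∃ a, (a, fB n) ∈ t.1 := by
    rintro ⟨s, hfin, hs⟩ n
    obtain ⟨b, hb⟩ := hs.exists_insert_fst hH hfin (fA n)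
    obtain ⟨a, ha⟩ := hb.exists_insert_snd hG (hfin.insert _) (fB n)
    refine ⟨⟨_, (hfin.insert _).insert _, ha⟩,
      (Set.subset_insert _ _).trans (Set.subset_insert _ _), ⟨b, ?_⟩, a, ?_⟩ <;> simp
  choose next hnext using step
  let c : ℕ → P := fun n => Nat.rec ⟨∅, Set.finite_empty, by simp [IsPartialIso_s10]⟩
    (fun n s => next s n) n
  exact ⟨fun n => (c n).1, monotone_nat_of_le_succ fun n => (hnext (c n) n).1,
    fun n => (c n).2.2, fun n => (hnext (c n) n).2⟩

theorem nonempty_iso [Countable A] [Countable B] (hG : G.HasPropR) (hH : H.HasPropR) :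
    Nonempty (G ≃g H) := by
  have := hG.nonempty
  have := hH.nonempty
  obtain ⟨fA, hfA⟩ := exists_surjective_nat A
  obtain ⟨fB, hfB⟩ := exists_surjective_nat B
  obtain ⟨c, hmono, hc, hext⟩ := hG.exists_isPartialIso_seq hH fA fB
  refine (IsPartialIso_s10.iUnion hmono.directed_le hc).nonempty_iso (fun a => ?_) (fun b => ?_)
  · obtain ⟨n, rfl⟩ := hfA a
    obtain ⟨b, hb⟩ := (hext n).1
    exact ⟨b, Set.mem_iUnion_of_mem _ hb⟩
  · obtain ⟨n, rfl⟩ := hfB b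
    obtain ⟨a, ha⟩ := (hext n).2
    exact ⟨a, Set.mem_iUnion_of_mem _ ha⟩

end HasPropR

end SimpleGraph

section LevelGraph

variable {Γ : Type*} [Group Γ] (e : ℕ → Finset (Γ × ℕ))

/-- `(g, n)` is joined to the vertices `(g * h, m)` with `m < n` and `(h, m) ∈ e n`, so the
graph is invariant under left translation of the first coordinate. -/
def levelGraph : SimpleGraph (Γ × ℕ) where
  Adj p q :=
    (p.2 < q.2 ∧ (q.1⁻¹ * p.1, p.2) ∈ e q.2) ∨ (q.2 < p.2 ∧ (p.1⁻¹ * q.1, q.2) ∈ e p.2)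
  symm := ⟨fun _ _ h => h.symm⟩
  loopless := ⟨fun _ h => by rcases h with ⟨h, -⟩ | ⟨h, -⟩ <;> exact lt_irrefl _ h⟩

lemma levelGraph_adj_one_iff {n : ℕ} {q : Γ × ℕ} (hq : q.2 < n) :
    (levelGraph e).Adj (1, n) q ↔ q ∈ e n := by
  simp [levelGraph, hq, hq.not_gt]

variable {e} in
lemma levelGraph_hasPropR (he : ∀ s N, ∃ n, N < n ∧ e n = s) : (levelGraph e).HasPropR := by
  classical
  intro U W hUW
  obtain ⟨n, hn, hen⟩ := he U ((U ∪ W).sup Prod.snd)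
  have hlt : ∀ p ∈ U ∪ W, p.2 < n := fun p hp => (Finset.le_sup hp).trans_lt hn
  refine ⟨(1, n), fun h => ?_, fun h => ?_, fun u hu => ?_, fun w hw => ?_⟩
  · exact lt_irrefl _ (hlt _ (Finset.mem_union_left _ h))
  · exact lt_irrefl _ (hlt _ (Finset.mem_union_right _ h))
  · exact (levelGraph_adj_one_iff _ (hlt u (Finset.mem_union_left _ hu))).2 (hen ▸ hu)
  · rw [levelGraph_adj_one_iff _ (hlt w (Finset.mem_union_right _ hw)), hen]
    exact Finset.disjoint_right.1 hUW hw

def levelGraph.translate : Γ →* (levelGraph e ≃g levelGraph e) where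
  toFun γ :=
    { toEquiv := (Equiv.mulLeft γ).prodCongr (Equiv.refl ℕ)
      map_rel_iff' := by simp [levelGraph, mul_assoc] }
  map_one' := RelIso.ext fun _ => Prod.ext (one_mul _) rfl
  map_mul' _ _ := RelIso.ext fun _ => Prod.ext (mul_assoc _ _ _) rfl

@[simp]
lemma levelGraph.translate_apply (γ : Γ) (p : Γ × ℕ) :
    levelGraph.translate e γ p = (γ * p.1, p.2) := rfl

lemma levelGraph.nonSingularAction_translate :
    NonSingularAction (levelGraph e) (levelGraph.translate e) := by
  rintro γ u (⟨h, -⟩ | ⟨h, -⟩) <;> exact lt_irrefl _ h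

lemma levelGraph.freeAction_translate : FreeAction (levelGraph e) (levelGraph.translate e) :=
  fun γ x h => by simpa using congrArg Prod.fst h

variable {e} in
lemma levelGraph.propertyF_translate (he : ∀ s N, ∃ n, N < n ∧ e n = s) :
    PropertyF (levelGraph e) (levelGraph.translate e) := by
  intro S F hS
  obtain ⟨n, hn, hen⟩ := he ∅ (F.sup Prod.snd)
  have hlt : ∀ p ∈ F, p.2 < n := fun p hp => (Finset.le_sup hp).trans_lt hn
  refine ⟨(1, n), fun h => lt_irrefl _ (hlt _ h), fun u hu => ?_, fun g hg h => ?_⟩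
  · simp [levelGraph_adj_one_iff _ (hlt u hu), hen]
  · exact hS (levelGraph.freeAction_translate e g _ h ▸ hg)

lemma levelGraph.finite_setOf_translate_eq_or_adj (u v : Γ × ℕ) :
    {γ | levelGraph.translate e γ u = v ∨
      (levelGraph e).Adj (levelGraph.translate e γ u) v}.Finite := by
  refine (((Set.finite_singleton (v.1 * u.1⁻¹)).union
    ((e v.2).finite_toSet.image fun c => v.1 * c.1 * u.1⁻¹)).union
    ((e u.2).finite_toSet.image fun c => v.1 * c.1⁻¹ * u.1⁻¹)).subset ?_
  rintro γ (h | ⟨-, h⟩ | ⟨-, h⟩)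
  · exact Or.inl (Or.inl (by simp [← h]))
  · exact Or.inl (Or.inr ⟨_, h, by simp [mul_assoc]⟩)
  · exact Or.inr ⟨_, h, by simp [mul_assoc]⟩

lemma levelGraph.disconnectsFinsets_translate [Infinite Γ] :
    DisconnectsFinsets (levelGraph e) (levelGraph.translate e) := by
  intro F
  obtain ⟨γ, hγ⟩ := (F.finite_toSet.prod F.finite_toSet).biUnion
    (fun uv _ => levelGraph.finite_setOf_translate_eq_or_adj e uv.1 uv.2) |>.exists_notMem
  simp only [Set.mem_iUnion, Set.mem_ofPred_eq, not_exists, not_or] at hγ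
  exact ⟨γ, fun u hu hγu => (hγ (u, _) ⟨hu, hγu⟩).1 rfl,
    fun u hu v hv => (hγ (u, v) ⟨hu, hv⟩).2⟩

end LevelGraph

section Transport

variable {Γ V W : Type*} [Group Γ] {G : SimpleGraph V} {H : SimpleGraph W}

def SimpleGraph.Iso.autCongr (φ : G ≃g H) : (G ≃g G) →* (H ≃g H) where
  toFun f := (φ.symm.trans f).trans φ
  map_one' := RelIso.ext fun _ => φ.apply_symm_apply _
  map_mul' _ _ := RelIso.ext fun _ => by simp

@[simp]
lemma SimpleGraph.Iso.autCongr_apply (φ : G ≃g H) (f : G ≃g G) (x : W) :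
    φ.autCongr f x = φ (f (φ.symm x)) := rfl

variable {ρ : Γ →* (G ≃g G)} (φ : G ≃g H)

lemma NonSingularAction.autCongr (h : NonSingularAction G ρ) :
    NonSingularAction H (φ.autCongr.comp ρ) := fun g u hadj => by
  simpa using h g (φ.symm u) (by simpa using φ.symm.map_adj_iff.2 hadj)

lemma FreeAction.autCongr (h : FreeAction G ρ) : FreeAction H (φ.autCongr.comp ρ) :=
  fun g x hx => h g (φ.symm x) (by simpa using congrArg φ.symm hx)

lemma PropertyF.autCongr (h : PropertyF G ρ) : PropertyF H (φ.autCongr.comp ρ) := by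
  classical
  intro S F hS
  obtain ⟨x, hxF, hxadj, hxS⟩ := h S (F.image φ.symm) hS
  refine ⟨φ x, fun hx => hxF ?_, fun u hu hadj => hxadj _ (Finset.mem_image_of_mem _ hu) ?_,
    fun g hg hgx => hxS g hg ?_⟩
  · simpa using Finset.mem_image_of_mem φ.symm hx
  · simpa using φ.symm.map_adj_iff.2 hadj
  · simpa using hgx

lemma DisconnectsFinsets.autCongr (h : DisconnectsFinsets G ρ) :
    DisconnectsFinsets H (φ.autCongr.comp ρ) := by
  classical
  intro F
  obtain ⟨g, hgF, hgadj⟩ := h (F.image φ.symm)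
  refine ⟨g, fun u hu hgu => hgF _ (Finset.mem_image_of_mem _ hu) ?_,
    fun u hu v hv hadj =>
      hgadj _ (Finset.mem_image_of_mem _ hu) _ (Finset.mem_image_of_mem _ hv) ?_⟩
  · simpa using Finset.mem_image_of_mem φ.symm hgu
  · simpa using φ.symm.map_adj_iff.2 hadj

end Transport

lemma exists_seq_frequently_eq (α : Type*) [Countable α] [Nonempty α] :
    ∃ e : ℕ → α, ∀ a N, ∃ n, N < n ∧ e n = a := by
  obtain ⟨f, hf⟩ := exists_surjective_nat α
  refine ⟨fun n => f n.unpair.1, fun a N => ?_⟩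
  obtain ⟨i, rfl⟩ := hf a
  exact ⟨Nat.pair i (N + 1), Nat.right_le_pair i (N + 1), by simp⟩

/-- Every infinite countable group acts on a countable graph with property (R) by a
non-singular action with property (F) which disconnects the finite sets; if the group is
torsion-free, the action can moreover be chosen free. -/
theorem exists_nice_action {Γ : Type*} [Group Γ] [Countable Γ] [Infinite Γ]
    {V : Type*} [Countable V] (R : SimpleGraph V) (hR : R.HasPropR) :
    (∃ ρ : Γ →* (R ≃g R),
      NonSingularAction R ρ ∧ PropertyF R ρ ∧ DisconnectsFinsets R ρ) ∧
    ((∀ g : Γ, g ≠ 1 → ¬IsOfFinOrder g) →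
      ∃ ρ : Γ →* (R ≃g R),
        NonSingularAction R ρ ∧ PropertyF R ρ ∧ DisconnectsFinsets R ρ ∧
          FreeAction R ρ) := by
  obtain ⟨e, he⟩ := exists_seq_frequently_eq (Finset (Γ × ℕ))
  obtain ⟨φ⟩ := (levelGraph_hasPropR he).nonempty_iso hR
  have hNS := (levelGraph.nonSingularAction_translate e).autCongr φ
  have hF := (levelGraph.propertyF_translate he).autCongr φ
  have hD := (levelGraph.disconnectsFinsets_translate e).autCongr φ
  have hFree := (levelGraph.freeAction_translate e).autCongr φ
  exact ⟨⟨_, hNS, hF, hD⟩, fun _ => ⟨_, hNS, hF, hD, hFree⟩⟩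
end
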